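/- arXiv:2312.08273 — 4 statements merged into one kernel-verified Lean document; each statement's English description precedes it below -/
import Mathlib

section
/- For the king's graph and n ≥ 2, the number of staircase words over [k] with first column (i,i) satisfies the recurrence: s_k(KG_{2,n}, i, i) = s_k(KG_{2,n-1}, i-1, i-1) + 2·s_k(KG_{2,n-1}, i, i-1) + s_k(KG_{2,n-1}, i, i) + 2·s_k(KG_{2,n-1}, i+1, i) + s_k(KG_{2,n-1}, i+1, i+1), where terms with indices outside [k] are taken to be 0. -/
/-- A word `w` on vertex type `V` (values in `Fin k`, thought of as `1..k`)
is *staircase* w.r.t. an adjacency relation if adjacent vertices get values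
differing by at most 1. -/
def IsStaircase {V : Type*} (Adj : V → V → Prop) {k : ℕ} (w : V → Fin k) : Prop :=
  ∀ u v, Adj u v → |(w u : ℤ) - (w v : ℤ)| ≤ 1

/-- Adjacency of the grid graph `P_2 × P_n` on `{1,2} × {1,...,n}`. -/
def gridAdj {n : ℕ} (u v : Fin 2 × Fin n) : Prop :=
  |(u.1 : ℤ) - (v.1 : ℤ)| + |(u.2 : ℤ) - (v.2 : ℤ)| = 1

/-- Adjacency of the rectangle-triangular graph `RT_{2,n}`. -/
def rtAdj {n : ℕ} (u v : Fin 2 × Fin n) : Prop :=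
  gridAdj u v ∨ (u.1 = 0 ∧ v.1 = 1 ∧ (v.2 : ℤ) = (u.2 : ℤ) + 1)
    ∨ (u.1 = 1 ∧ v.1 = 0 ∧ (v.2 : ℤ) = (u.2 : ℤ) - 1)

/-- Adjacency of the king's graph `KG_{2,n}`. -/
def kingAdj {n : ℕ} (u v : Fin 2 × Fin n) : Prop :=
  u ≠ v ∧ |(u.1 : ℤ) - (v.1 : ℤ)| ≤ 1 ∧ |(u.2 : ℤ) - (v.2 : ℤ)| ≤ 1

/-- `scount k n Adj` is the number of staircase words over alphabet `[k]`
on the `2 × n` vertex set with adjacency `Adj`. -/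
noncomputable def scount (k n : ℕ) (Adj : Fin 2 × Fin n → Fin 2 × Fin n → Prop) : ℕ :=
  Nat.card {w : Fin 2 × Fin n → Fin k // IsStaircase Adj w}

/-- `scountIJ k n Adj i j` is the number of staircase words over `[k]` on the
`2 × (n+1)` vertex set whose first column is `(i, j)` (values `1`-based;
it is `0` if `i` or `j` lies outside `{1,...,k}`). -/
noncomputable def scountIJ (k n : ℕ) (Adj : Fin 2 × Fin (n + 1) → Fin 2 × Fin (n + 1) → Prop)
    (i j : ℕ) : ℕ :=
  Nat.card {w : Fin 2 × Fin (n + 1) → Fin k //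
    IsStaircase Adj w ∧ ((w (0, 0) : ℕ) + 1 = i) ∧ ((w (1, 0) : ℕ) + 1 = j)}

lemma kingAdj_succ {n : ℕ} (x y : Fin 2) (a b : Fin (n + 1)) :
    kingAdj (x, a.succ) (y, b.succ) ↔ kingAdj (x, a) (y, b) := by
  unfold kingAdj
  have h2 : |((a.succ : Fin (n+2)) : ℤ) - ((b.succ : Fin (n+2)) : ℤ)| = |(a : ℤ) - (b : ℤ)| := by
    simp only [Fin.val_succ]
    push_cast
    congr 1
    ring
  have h1 : ((x, a.succ) ≠ (y, b.succ)) ↔ ((x, a) ≠ (y, b)) := by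
    simp [Prod.ext_iff, Fin.succ_inj]
  rw [h1]
  constructor <;> rintro ⟨u, v, w⟩ <;> refine ⟨u, v, ?_⟩
  · rwa [h2] at w
  · rwa [h2]

lemma king_swap {n : ℕ} {u v : Fin 2 × Fin n} (h : kingAdj u v) :
    kingAdj (1 - u.1, u.2) (1 - v.1, v.2) := by
  obtain ⟨x, a⟩ := u
  obtain ⟨y, b⟩ := v
  obtain ⟨hne, h1, h2⟩ := h
  refine ⟨?_, ?_, h2⟩
  · intro hc
    rw [Prod.mk.injEq] at hc
    apply hne
    rw [Prod.mk.injEq]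
    exact ⟨by have := hc.1; fin_cases x <;> fin_cases y <;> simp_all, hc.2⟩
  · fin_cases x <;> fin_cases y <;> simp_all

lemma step_A (k n i : ℕ) (hi : 1 ≤ i) (hik : i ≤ k) :
    scountIJ k (n + 1) kingAdj i i =
      Nat.card {w : Fin 2 × Fin (n+1) → Fin k // IsStaircase kingAdj w ∧
        (i ≤ (w (0,0)).val + 2 ∧ (w (0,0)).val ≤ i) ∧
        (i ≤ (w (1,0)).val + 2 ∧ (w (1,0)).val ≤ i)} := by
  set v : Fin k := ⟨i - 1, by omega⟩ with hv
  have hvv : (v : ℕ) = i - 1 := rfl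
  have hadj0 : ∀ x : Fin 2, kingAdj ((x, 0) : Fin 2 × Fin (n+2)) (x, Fin.succ 0) := by
    intro x
    refine ⟨?_, ?_, ?_⟩
    · simp [Prod.ext_iff, Fin.ext_iff]
    · simp
    · simp [Fin.val_succ]
  unfold scountIJ
  apply Nat.card_congr
  refine ⟨fun w => ⟨fun p => w.1 (p.1, p.2.succ), ?_, ?_, ?_⟩,
          fun w => ⟨fun p => Fin.cases v (fun j => w.1 (p.1, j)) p.2, ?_, ?_, ?_⟩, ?_, ?_⟩
  · intro u u' h
    exact w.2.1 _ _ ((kingAdj_succ u.1 u'.1 u.2 u'.2).mpr h)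
  · have h1 := w.2.1 _ _ (hadj0 0)
    have h0 := w.2.2.1
    rw [abs_le] at h1
    simp only at h1 ⊢
    omega
  · have h1 := w.2.1 _ _ (hadj0 1)
    have h0 := w.2.2.2
    rw [abs_le] at h1
    simp only at h1 ⊢
    omega
  · have hcond : ∀ y : Fin 2, i ≤ (w.1 (y, (0 : Fin (n+1)))).val + 2 ∧
        (w.1 (y, (0 : Fin (n+1)))).val ≤ i := by
      intro y
      fin_cases y
      · exact w.2.2.1
      · exact w.2.2.2
    rintro ⟨x, a⟩ ⟨y, b⟩ h
    induction a using Fin.cases with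
    | zero =>
      induction b using Fin.cases with
      | zero => simp
      | succ b =>
        have hb : b = 0 := by
          have := h.2.2
          rw [abs_le] at this
          simp only [Fin.val_succ, Fin.val_zero] at this
          ext
          simp only [Fin.val_zero]
          push_cast at this
          omega
        subst hb
        simp only [Fin.cases_zero, Fin.cases_succ]
        have := hcond y
        rw [abs_le]
        push_cast
        omega
    | succ a =>
      induction b using Fin.cases with
      | zero =>
        have ha : a = 0 := by
          have := h.2.2
          rw [abs_le] at this
          simp only [Fin.val_succ, Fin.val_zero] at this
          ext
          simp only [Fin.val_zero]
          push_cast at this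
          omega
        subst ha
        simp only [Fin.cases_zero, Fin.cases_succ]
        have := hcond x
        rw [abs_le]
        push_cast
        omega
      | succ b =>
        simp only [Fin.cases_succ]
        exact w.2.1 _ _ ((kingAdj_succ x y a b).mp h)
  · show (v : ℕ) + 1 = i
    omega
  · show (v : ℕ) + 1 = i
    omega
  · intro w
    have hc0' : ∀ x : Fin 2, (w.1 (x, (0 : Fin (n+2)))).val + 1 = i := by
      intro x
      fin_cases x
      · exact w.2.2.1
      · exact w.2.2.2
    apply Subtype.ext
    funext p
    obtain ⟨x, j⟩ := p
    induction j using Fin.cases with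
    | zero =>
      simp only [Fin.cases_zero]
      ext
      have := hc0' x
      omega
    | succ j => simp
  · intro w
    apply Subtype.ext
    funext p
    simp

lemma step_B (k n i : ℕ) (hi : 1 ≤ i) :
    Nat.card {w : Fin 2 × Fin (n+1) → Fin k // IsStaircase kingAdj w ∧
        (i ≤ (w (0,0)).val + 2 ∧ (w (0,0)).val ≤ i) ∧
        (i ≤ (w (1,0)).val + 2 ∧ (w (1,0)).val ≤ i)} =
      scountIJ k n kingAdj (i-1) (i-1) + scountIJ k n kingAdj (i-1) i
      + scountIJ k n kingAdj i (i-1) + scountIJ k n kingAdj i i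
      + scountIJ k n kingAdj i (i+1) + scountIJ k n kingAdj (i+1) i
      + scountIJ k n kingAdj (i+1) (i+1) := by
  classical
  have hadj01 : kingAdj ((0,0) : Fin 2 × Fin (n+1)) (1,0) := by
    refine ⟨?_, ?_, ?_⟩
    · simp [Prod.ext_iff]
    · simp
    · simp
  set Q : (Fin 2 × Fin (n+1) → Fin k) → Prop := fun w => IsStaircase kingAdj w ∧
        (i ≤ (w (0,0)).val + 2 ∧ (w (0,0)).val ≤ i) ∧
        (i ≤ (w (1,0)).val + 2 ∧ (w (1,0)).val ≤ i) with hQ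
  set f : (Fin 2 × Fin (n+1) → Fin k) → ℕ × ℕ :=
    fun w => ((w (0,0)).val + 1, (w (1,0)).val + 1) with hf
  set P : Finset (ℕ × ℕ) :=
    {(i-1,i-1),(i-1,i),(i,i-1),(i,i),(i,i+1),(i+1,i),(i+1,i+1)} with hP
  have hfib : ∀ a b : ℕ, i ≤ a + 1 → a ≤ i + 1 → i ≤ b + 1 → b ≤ i + 1 →
      ((Finset.univ.filter Q).filter (fun w => f w = (a, b))).card
        = scountIJ k n kingAdj a b := by
    intro a b ha1 ha2 hb1 hb2
    unfold scountIJ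
    rw [Nat.card_eq_fintype_card, Fintype.card_subtype, Finset.filter_filter]
    congr 1
    apply Finset.filter_congr
    intro w _
    simp only [hQ, hf, Prod.mk.injEq]
    constructor
    · rintro ⟨⟨h1, _⟩, h2, h3⟩; exact ⟨h1, h2, h3⟩
    · rintro ⟨h1, h2, h3⟩; exact ⟨⟨h1, by omega, by omega⟩, h2, h3⟩
  have hmem : ∀ w ∈ Finset.univ.filter Q, f w ∈ P := by
    intro w hw
    rw [Finset.mem_filter] at hw
    obtain ⟨-, hst, h0, h1⟩ := hw
    have hab := hst _ _ hadj01
    rw [abs_le] at hab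
    simp only [hP, hf, Finset.mem_insert, Finset.mem_singleton, Prod.mk.injEq]
    omega
  have hcard : Nat.card {w : Fin 2 × Fin (n+1) → Fin k // Q w}
      = (Finset.univ.filter Q).card := by
    rw [Nat.card_eq_fintype_card, Fintype.card_subtype]
  rw [hcard, Finset.card_eq_sum_card_fiberwise hmem]
  rw [hP]
  rw [Finset.sum_insert (by simp only [Finset.mem_insert, Finset.mem_singleton, Prod.mk.injEq]; omega)]
  rw [Finset.sum_insert (by simp only [Finset.mem_insert, Finset.mem_singleton, Prod.mk.injEq]; omega)]
  rw [Finset.sum_insert (by simp only [Finset.mem_insert, Finset.mem_singleton, Prod.mk.injEq]; omega)]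
  rw [Finset.sum_insert (by simp only [Finset.mem_insert, Finset.mem_singleton, Prod.mk.injEq]; omega)]
  rw [Finset.sum_insert (by simp only [Finset.mem_insert, Finset.mem_singleton, Prod.mk.injEq]; omega)]
  rw [Finset.sum_insert (by simp only [Finset.mem_singleton, Prod.mk.injEq]; omega)]
  rw [Finset.sum_singleton]
  rw [hfib (i-1) (i-1) (by omega) (by omega) (by omega) (by omega),
      hfib (i-1) i (by omega) (by omega) (by omega) (by omega),
      hfib i (i-1) (by omega) (by omega) (by omega) (by omega),
      hfib i i (by omega) (by omega) (by omega) (by omega),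
      hfib i (i+1) (by omega) (by omega) (by omega) (by omega),
      hfib (i+1) i (by omega) (by omega) (by omega) (by omega),
      hfib (i+1) (i+1) (by omega) (by omega) (by omega) (by omega)]
  ring

lemma king_swap' {n : ℕ} {u v : Fin 2 × Fin n} (h : kingAdj u v) :
    kingAdj (1 - u.1, u.2) (1 - v.1, v.2) := by
  obtain ⟨x, a⟩ := u
  obtain ⟨y, b⟩ := v
  obtain ⟨hne, h1, h2⟩ := h
  refine ⟨?_, ?_, h2⟩
  · intro hc
    rw [Prod.mk.injEq] at hc
    apply hne
    rw [Prod.mk.injEq]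
    exact ⟨by have := hc.1; fin_cases x <;> fin_cases y <;> simp_all, hc.2⟩
  · fin_cases x <;> fin_cases y <;> simp_all

lemma stair_swap {k n : ℕ} {w : Fin 2 × Fin n → Fin k} (h : IsStaircase kingAdj w) :
    IsStaircase kingAdj (fun p => w (1 - p.1, p.2)) := by
  intro u v huv
  exact h _ _ (king_swap' huv)

lemma scountIJ_symm (k n a b : ℕ) : scountIJ k n kingAdj a b = scountIJ k n kingAdj b a := by
  unfold scountIJ
  apply Nat.card_congr
  refine ⟨fun w => ⟨fun p => w.1 (1 - p.1, p.2), stair_swap w.2.1, ?_, ?_⟩,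
          fun w => ⟨fun p => w.1 (1 - p.1, p.2), stair_swap w.2.1, ?_, ?_⟩, ?_, ?_⟩
  · simpa using w.2.2.2
  · simpa using w.2.2.1
  · simpa using w.2.2.2
  · simpa using w.2.2.1
  · intro w; ext p : 2; obtain ⟨x, a⟩ := p; fin_cases x <;> simp
  · intro w; ext p : 2; obtain ⟨x, a⟩ := p; fin_cases x <;> simp

theorem king_rec_diag (k n i : ℕ) (hi : 1 ≤ i) (hik : i ≤ k) :
    scountIJ k (n + 1) kingAdj i i =
      scountIJ k n kingAdj (i - 1) (i - 1) + 2 * scountIJ k n kingAdj i (i - 1)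
        + scountIJ k n kingAdj i i + 2 * scountIJ k n kingAdj (i + 1) i
        + scountIJ k n kingAdj (i + 1) (i + 1) := by
  rw [step_A k n i hi hik, step_B k n i hi, scountIJ_symm k n (i-1) i,
      scountIJ_symm k n i (i+1)]
  ring
end

section
/- The number of staircase words on the 2×n king's graph over alphabet {1,2,3} equals ((5√7+7)/14)(2+√7)^n − ((5√7−7)/14)(2−√7)^n for every n ≥ 1. -/
namespace KP

abbrev Col := Fin 3 × Fin 3

def ok (p : Col) : Prop := |(p.1 : ℤ) - (p.2 : ℤ)| ≤ 1

def compat (p q : Col) : Prop :=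
  |(p.1 : ℤ) - (q.1 : ℤ)| ≤ 1 ∧ |(p.1 : ℤ) - (q.2 : ℤ)| ≤ 1 ∧
  |(p.2 : ℤ) - (q.1 : ℤ)| ≤ 1 ∧ |(p.2 : ℤ) - (q.2 : ℤ)| ≤ 1

instance : DecidablePred ok := fun p => by unfold ok; infer_instance
instance : ∀ p q, Decidable (compat p q) := fun p q => by unfold compat; infer_instance

def GoodSeq {n : ℕ} (c : Fin n → Col) : Prop :=
  (∀ i, ok (c i)) ∧ ∀ i : Fin n, ∀ h : (i : ℕ) + 1 < n, compat (c i) (c ⟨(i : ℕ) + 1, h⟩)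

instance {n : ℕ} : DecidablePred (GoodSeq (n := n)) := fun c => by
  unfold GoodSeq; exact instDecidableAnd


def toSeq {n : ℕ} (w : Fin 2 × Fin n → Fin 3) : Fin n → Col := fun i => (w (0, i), w (1, i))

def fromSeq {n : ℕ} (c : Fin n → Col) : Fin 2 × Fin n → Fin 3 :=
  fun v => if v.1 = 0 then (c v.2).1 else (c v.2).2

lemma toSeq_fromSeq {n : ℕ} (c : Fin n → Col) : toSeq (fromSeq c) = c := by
  funext i; simp [toSeq, fromSeq]

lemma fromSeq_toSeq {n : ℕ} (w : Fin 2 × Fin n → Fin 3) : fromSeq (toSeq w) = w := by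
  funext v
  obtain ⟨r, i⟩ := v
  fin_cases r <;> simp [toSeq, fromSeq]

lemma stair_iff {n : ℕ} (w : Fin 2 × Fin n → Fin 3) :
    IsStaircase kingAdj w ↔ GoodSeq (toSeq w) := by
  constructor
  · intro H
    constructor
    · intro i
      exact H (0, i) (1, i) ⟨by simp, by simp, by simp⟩
    · intro i h
      have hne : i ≠ (⟨(i : ℕ) + 1, h⟩ : Fin n) := by
        intro he; have := congrArg Fin.val he; simp at this
      have hd : |(i : ℤ) - ((⟨(i : ℕ) + 1, h⟩ : Fin n) : ℤ)| ≤ 1 := by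
        have : ((⟨(i : ℕ) + 1, h⟩ : Fin n) : ℤ) = (i : ℤ) + 1 := by
          simp [Fin.val_mk]
        rw [this, show (i : ℤ) - ((i : ℤ) + 1) = -1 by ring]
        norm_num
      exact ⟨H (0, i) (0, ⟨(i : ℕ) + 1, h⟩) ⟨by simp [hne], by simp, hd⟩,
             H (0, i) (1, ⟨(i : ℕ) + 1, h⟩) ⟨by simp, by simp, hd⟩,
             H (1, i) (0, ⟨(i : ℕ) + 1, h⟩) ⟨by simp, by simp, hd⟩,
             H (1, i) (1, ⟨(i : ℕ) + 1, h⟩) ⟨by simp [hne], by simp, hd⟩⟩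
  · rintro ⟨hok, hcomp⟩ ⟨r, i⟩ ⟨s, j⟩ ⟨hne, -, hij⟩
    dsimp only at hij ⊢
    rw [abs_sub_le_iff] at hij
    rcases lt_trichotomy (i : ℕ) (j : ℕ) with hlt | heq | hgt
    · have hj : (j : ℕ) = (i : ℕ) + 1 := by omega
      have hc := hcomp i (hj ▸ j.isLt)
      have hjj : (⟨(i : ℕ) + 1, hj ▸ j.isLt⟩ : Fin n) = j := by
        apply Fin.ext; simp [hj]
      rw [hjj] at hc
      obtain ⟨h1, h2, h3, h4⟩ := hc
      simp only [toSeq] at h1 h2 h3 h4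
      fin_cases r <;> fin_cases s <;>
        first | exact h1 | exact h2 | exact h3 | exact h4
    · have hij' : i = j := Fin.ext heq
      subst hij'
      have hrs : r ≠ s := by intro he; exact hne (by rw [he])
      have hk := hok i
      simp only [toSeq, ok] at hk
      fin_cases r <;> fin_cases s <;> simp_all <;>
        first
        | exact hk
        | (rw [abs_sub_comm]; exact hk)
    · have hi : (i : ℕ) = (j : ℕ) + 1 := by omega
      have hc := hcomp j (hi ▸ i.isLt)
      have hii : (⟨(j : ℕ) + 1, hi ▸ i.isLt⟩ : Fin n) = i := by
        apply Fin.ext; simp [hi]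
      rw [hii] at hc
      obtain ⟨h1, h2, h3, h4⟩ := hc
      simp only [toSeq] at h1 h2 h3 h4
      fin_cases r <;> fin_cases s <;> rw [abs_sub_comm] <;>
        first | exact h1 | exact h2 | exact h3 | exact h4

def wordEquiv (n : ℕ) :
    {w : Fin 2 × Fin n → Fin 3 // IsStaircase kingAdj w} ≃ {c : Fin n → Col // GoodSeq c} where
  toFun w := ⟨toSeq w.1, (stair_iff w.1).1 w.2⟩
  invFun c := ⟨fromSeq c.1, by
    have := (stair_iff (fromSeq c.1)).2
    rw [toSeq_fromSeq] at this
    exact this c.2⟩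
  left_inv w := Subtype.ext (fromSeq_toSeq w.1)
  right_inv c := Subtype.ext (toSeq_fromSeq c.1)

lemma scount_eq (n : ℕ) :
    scount 3 n kingAdj = Fintype.card {c : Fin n → Col // GoodSeq c} := by
  rw [scount, Nat.card_congr (wordEquiv n), Nat.card_eq_fintype_card]

def low (p : Col) : Prop := (p.1 : ℕ) ≤ 1 ∧ (p.2 : ℕ) ≤ 1
def high (p : Col) : Prop := 1 ≤ (p.1 : ℕ) ∧ 1 ≤ (p.2 : ℕ)

instance : DecidablePred low := fun p => by unfold low; infer_instance
instance : DecidablePred high := fun p => by unfold high; infer_instance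

def cnt (n : ℕ) (Q : Col → Prop) [DecidablePred Q] : ℕ :=
  Fintype.card {c : Fin (n + 1) → Col // GoodSeq c ∧ Q (c (Fin.last n))}

lemma cnt_congr (n : ℕ) (Q Q' : Col → Prop) [DecidablePred Q] [DecidablePred Q']
    (h : ∀ τ, ok τ → (Q τ ↔ Q' τ)) : cnt n Q = cnt n Q' := by
  apply Fintype.card_congr
  apply Equiv.subtypeEquivRight
  intro c
  constructor
  · rintro ⟨hg, hq⟩; exact ⟨hg, (h _ (hg.1 _)).1 hq⟩
  · rintro ⟨hg, hq⟩; exact ⟨hg, (h _ (hg.1 _)).2 hq⟩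

lemma goodSeq_init {n : ℕ} {c : Fin (n + 2) → Col} (h : GoodSeq c) :
    GoodSeq (Fin.init c) := by
  refine ⟨fun i => h.1 _, fun i hi => ?_⟩
  have hi2 : ((i.castSucc : Fin (n + 2)) : ℕ) + 1 < n + 2 := by
    simp only [Fin.coe_castSucc]; omega
  have h2 := h.2 i.castSucc hi2
  simp only [Fin.init]
  have e1 : (⟨((i.castSucc : Fin (n + 2)) : ℕ) + 1, hi2⟩ : Fin (n + 2)) =
      Fin.castSucc (⟨(i : ℕ) + 1, hi⟩ : Fin (n + 1)) := by
    apply Fin.ext; simp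
  rw [e1] at h2
  exact h2

lemma compat_init {n : ℕ} {c : Fin (n + 2) → Col} (h : GoodSeq c) :
    compat (Fin.init c (Fin.last n)) (c (Fin.last (n + 1))) := by
  have hlt : ((Fin.castSucc (Fin.last n) : Fin (n + 2)) : ℕ) + 1 < n + 2 := by
    simp
  have h2 := h.2 (Fin.castSucc (Fin.last n)) hlt
  have e1 : (⟨((Fin.castSucc (Fin.last n) : Fin (n + 2)) : ℕ) + 1, hlt⟩ : Fin (n + 2)) =
      Fin.last (n + 1) := by
    apply Fin.ext; simp
  rw [e1] at h2
  simpa [Fin.init] using h2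

lemma goodSeq_snoc {n : ℕ} {d : Fin (n + 1) → Col} {σ : Col} (hd : GoodSeq d)
    (hok : ok σ) (hc : compat (d (Fin.last n)) σ) : GoodSeq (Fin.snoc d σ) := by
  constructor
  · intro i
    refine Fin.lastCases ?_ ?_ i
    · rw [Fin.snoc_last]; exact hok
    · intro j; rw [Fin.snoc_castSucc]; exact hd.1 j
  · intro i hi
    by_cases hcase : (i : ℕ) + 1 < n + 1
    · have hilt : (i : ℕ) < n + 1 := by omega
      have e0 : i = Fin.castSucc ⟨(i : ℕ), hilt⟩ := by apply Fin.ext; simp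
      have e1 : (⟨(i : ℕ) + 1, hi⟩ : Fin (n + 2)) =
          Fin.castSucc ⟨(i : ℕ) + 1, hcase⟩ := by apply Fin.ext; simp
      have v0 := congrArg (Fin.snoc d σ) e0
      have v1 := congrArg (Fin.snoc d σ) e1
      rw [Fin.snoc_castSucc] at v0 v1
      rw [v0, v1]
      exact hd.2 ⟨(i : ℕ), hilt⟩ hcase
    · have hn : (i : ℕ) = n := by omega
      have e0 : i = Fin.castSucc (Fin.last n) := by apply Fin.ext; simp [hn]
      have e1 : (⟨(i : ℕ) + 1, hi⟩ : Fin (n + 2)) = Fin.last (n + 1) := by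
        apply Fin.ext; simp [hn]
      have v0 := congrArg (Fin.snoc d σ) e0
      have v1 := congrArg (Fin.snoc d σ) e1
      rw [Fin.snoc_castSucc] at v0
      rw [Fin.snoc_last] at v1
      rw [v0, v1]
      exact hc

lemma snocC_last {m : ℕ} (d : Fin m → Col) (σ : Col) :
    (Fin.snoc d σ : Fin (m + 1) → Col) (Fin.last m) = σ := by simp

lemma initC_snoc {m : ℕ} (d : Fin m → Col) (σ : Col) :
    Fin.init (Fin.snoc d σ : Fin (m + 1) → Col) = d := by simp

lemma fiber_card (n : ℕ) (Q : Col → Prop) [DecidablePred Q] (σ : Col) :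
    Fintype.card {c : {c : Fin (n + 2) → Col // GoodSeq c ∧ Q (c (Fin.last (n + 1)))} //
        c.1 (Fin.last (n + 1)) = σ} =
      if ok σ ∧ Q σ then cnt n (fun τ => compat τ σ) else 0 := by
  split_ifs with hQ
  · apply Fintype.card_congr
    refine ⟨fun c => ⟨Fin.init c.1.1, goodSeq_init c.1.2.1, ?_⟩,
            fun d => ⟨⟨Fin.snoc d.1 σ, goodSeq_snoc d.2.1 hQ.1 d.2.2, ?_⟩, ?_⟩, ?_, ?_⟩
    · have := compat_init c.1.2.1
      rw [c.2] at this
      exact this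
    · first
      | (show Q ((Fin.snoc d.1 σ : Fin (n + 2) → Col) (Fin.last (n + 1)));
         rw [snocC_last]; exact hQ.2)
      | exact snocC_last d.1 σ
    · first
      | (show Q ((Fin.snoc d.1 σ : Fin (n + 2) → Col) (Fin.last (n + 1)));
         rw [snocC_last]; exact hQ.2)
      | exact snocC_last d.1 σ
    · rintro ⟨⟨f, hf⟩, hσ⟩
      apply Subtype.ext; apply Subtype.ext
      show Fin.snoc (Fin.init f) σ = f
      rw [← hσ]
      exact Fin.snoc_init_self f
    · intro d
      apply Subtype.ext
      exact initC_snoc d.1 σ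
  · rw [Fintype.card_eq_zero_iff]
    constructor
    intro c
    apply hQ
    constructor
    · have := c.1.2.1.1 (Fin.last (n + 1))
      rw [c.2] at this
      exact this
    · have := c.1.2.2
      rw [c.2] at this
      exact this

lemma cnt_step (n : ℕ) (Q : Col → Prop) [DecidablePred Q] :
    cnt (n + 1) Q = ∑ σ : Col, if ok σ ∧ Q σ then cnt n (fun τ => compat τ σ) else 0 := by
  rw [cnt]
  rw [Fintype.card_congr
    (Equiv.sigmaFiberEquiv
      (fun c : {c : Fin (n + 2) → Col // GoodSeq c ∧ Q (c (Fin.last (n + 1)))} =>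
        c.1 (Fin.last (n + 1)))).symm]
  rw [Fintype.card_sigma]
  exact Finset.sum_congr rfl fun σ _ => fiber_card n Q σ

def aa (n : ℕ) : ℕ := cnt n (fun _ => True)
def ss (n : ℕ) : ℕ := cnt n low
def tt (n : ℕ) : ℕ := cnt n high

lemma aa_zero : aa 0 = 7 := by decide
lemma ss_zero : ss 0 = 4 := by decide
lemma tt_zero : tt 0 = 4 := by decide

lemma e00 (n : ℕ) : cnt n (fun τ => compat τ ((0 : Fin 3), (0 : Fin 3))) = ss n :=
  cnt_congr n _ _ (by decide)
lemma e01 (n : ℕ) : cnt n (fun τ => compat τ ((0 : Fin 3), (1 : Fin 3))) = ss n :=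
  cnt_congr n _ _ (by decide)
lemma e10 (n : ℕ) : cnt n (fun τ => compat τ ((1 : Fin 3), (0 : Fin 3))) = ss n :=
  cnt_congr n _ _ (by decide)
lemma e11 (n : ℕ) : cnt n (fun τ => compat τ ((1 : Fin 3), (1 : Fin 3))) = aa n :=
  cnt_congr n _ _ (by decide)
lemma e12 (n : ℕ) : cnt n (fun τ => compat τ ((1 : Fin 3), (2 : Fin 3))) = tt n :=
  cnt_congr n _ _ (by decide)
lemma e21 (n : ℕ) : cnt n (fun τ => compat τ ((2 : Fin 3), (1 : Fin 3))) = tt n :=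
  cnt_congr n _ _ (by decide)
lemma e22 (n : ℕ) : cnt n (fun τ => compat τ ((2 : Fin 3), (2 : Fin 3))) = tt n :=
  cnt_congr n _ _ (by decide)

lemma aa_step (n : ℕ) : aa (n + 1) = 3 * ss n + aa n + 3 * tt n := by
  rw [aa, cnt_step, Fintype.sum_prod_type]
  simp only [Fin.sum_univ_three, and_true]
  rw [if_pos (by decide), if_pos (by decide), if_neg (by decide),
      if_pos (by decide), if_pos (by decide), if_pos (by decide),
      if_neg (by decide), if_pos (by decide), if_pos (by decide)]
  rw [e00, e01, e10, e11, e12, e21, e22]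
  ring

lemma ss_step (n : ℕ) : ss (n + 1) = 3 * ss n + aa n := by
  rw [ss, cnt_step, Fintype.sum_prod_type]
  simp only [Fin.sum_univ_three]
  rw [if_pos (by decide), if_pos (by decide), if_neg (by decide),
      if_pos (by decide), if_pos (by decide), if_neg (by decide),
      if_neg (by decide), if_neg (by decide), if_neg (by decide)]
  rw [e00, e01, e10, e11]
  ring

lemma tt_step (n : ℕ) : tt (n + 1) = 3 * tt n + aa n := by
  rw [tt, cnt_step, Fintype.sum_prod_type]
  simp only [Fin.sum_univ_three]
  rw [if_neg (by decide), if_neg (by decide), if_neg (by decide),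
      if_neg (by decide), if_pos (by decide), if_pos (by decide),
      if_neg (by decide), if_pos (by decide), if_pos (by decide)]
  rw [e11, e12, e21, e22]
  ring

lemma closed_form (m : ℕ) :
    ((aa m : ℝ) = (5 * Real.sqrt 7 + 7) / 14 * (2 + Real.sqrt 7) ^ (m + 1)
        - (5 * Real.sqrt 7 - 7) / 14 * (2 - Real.sqrt 7) ^ (m + 1)) ∧
    ((ss m : ℝ) = (7 + 2 * Real.sqrt 7) / 14 * (2 + Real.sqrt 7) ^ (m + 1)
        + (7 - 2 * Real.sqrt 7) / 14 * (2 - Real.sqrt 7) ^ (m + 1)) ∧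
    ((tt m : ℝ) = (7 + 2 * Real.sqrt 7) / 14 * (2 + Real.sqrt 7) ^ (m + 1)
        + (7 - 2 * Real.sqrt 7) / 14 * (2 - Real.sqrt 7) ^ (m + 1)) := by
  have h7 : Real.sqrt 7 ^ 2 = 7 := Real.sq_sqrt (by norm_num)
  induction m with
  | zero =>
    rw [aa_zero, ss_zero, tt_zero]
    refine ⟨?_, ?_, ?_⟩ <;> push_cast <;>
      first
      | linear_combination (-(5 : ℝ) / 7) * h7
      | linear_combination (-(2 : ℝ) / 7) * h7
  | succ k ih =>
    obtain ⟨ha, hs, ht⟩ := ih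
    refine ⟨?_, ?_, ?_⟩
    · rw [aa_step]; push_cast; rw [ha, hs, ht]
      linear_combination (-(5 : ℝ) / 14) *
        ((2 + Real.sqrt 7) ^ (k + 1) + (2 - Real.sqrt 7) ^ (k + 1)) * h7
    · rw [ss_step]; push_cast; rw [hs, ha]
      linear_combination (-(1 : ℝ) / 7) *
        ((2 + Real.sqrt 7) ^ (k + 1) + (2 - Real.sqrt 7) ^ (k + 1)) * h7
    · rw [tt_step]; push_cast; rw [ht, ha]
      linear_combination (-(1 : ℝ) / 7) *
        ((2 + Real.sqrt 7) ^ (k + 1) + (2 - Real.sqrt 7) ^ (k + 1)) * h7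

end KP

namespace KP

lemma scount_aa (m : ℕ) : scount 3 (m + 1) kingAdj = aa m := by
  rw [scount_eq, aa, cnt]
  exact Fintype.card_congr (Equiv.subtypeEquivRight (fun c => by simp))

end KP


theorem king_k3_closed_form (n : ℕ) (hn : 1 ≤ n) :
    (scount 3 n kingAdj : ℝ) =
      (5 * Real.sqrt 7 + 7) / 14 * (2 + Real.sqrt 7) ^ n
        - (5 * Real.sqrt 7 - 7) / 14 * (2 - Real.sqrt 7) ^ n := by
  obtain ⟨m, rfl⟩ : ∃ m, n = m + 1 := ⟨n - 1, by omega⟩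
  rw [KP.scount_aa m]
  exact (KP.closed_form m).1
end

section
/- The sequence c_n = s_3(RT_{2,n}) of staircase words on the 2×n rectangle-triangular graph over alphabet {1,2,3} satisfies c_1 = 7, c_2 = 33, c_3 = 161, and c_{n+3} = 4·c_{n+2} + 4·c_{n+1} + c_n for all n ≥ 1. -/
open Matrix

theorem Nat.card_subtype_eq_sum_card_fiber {α β : Type*} [Finite α] [Fintype β]
    (p : α → Prop) (g : α → β) :
    Nat.card {x // p x} = ∑ b, Nat.card {x // p x ∧ g x = b} := by
  rw [← Nat.card_sigma, Nat.card_congr]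
  exact (Equiv.sigmaFiberEquiv fun x : {x // p x} => g x).symm.trans
    (Equiv.sigmaCongrRight fun b => Equiv.subtypeSubtypeEquivSubtypeInter p (g · = b))

theorem Matrix.pow_add_three_mulVec {α R : Type*} [Fintype α] [DecidableEq α] [CommSemiring R]
    (M : Matrix α α R) (v : α → R) (a b c : R)
    (h : M ^ 3 *ᵥ v = a • M ^ 2 *ᵥ v + b • M *ᵥ v + c • v) (n : ℕ) :
    M ^ (n + 3) *ᵥ v = a • M ^ (n + 2) *ᵥ v + b • M ^ (n + 1) *ᵥ v + c • M ^ n *ᵥ v := by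
  rw [pow_add, ← mulVec_mulVec, h, mulVec_add, mulVec_add, mulVec_smul, mulVec_smul, mulVec_smul,
    mulVec_mulVec, mulVec_mulVec, ← pow_add, ← pow_succ]

section TransferMatrix

variable {α : Type*} (P : α → Prop) (R : α → α → Prop)

def IsTransferPath {n : ℕ} (s : Fin (n + 1) → α) : Prop :=
  (∀ i, P (s i)) ∧ ∀ i : Fin n, R (s i.castSucc) (s i.succ)

variable {P R}

theorem isTransferPath_cons {n : ℕ} (a : α) (t : Fin (n + 1) → α) :
    IsTransferPath P R (Fin.cons a t : Fin (n + 2) → α) ↔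
      P a ∧ R a (t 0) ∧ IsTransferPath P R t := by
  simp only [IsTransferPath, Fin.forall_fin_succ, Fin.cons_zero, Fin.cons_succ,
    Fin.castSucc_zero, Fin.castSucc_succ]
  tauto

variable (P R) [DecidablePred P] [DecidableRel R]

def transferMatrix : Matrix α α ℕ :=
  Matrix.of fun a b => if P a ∧ R a b then 1 else 0

def indicatorVec : α → ℕ := fun a => if P a then 1 else 0

variable [Fintype α] [DecidableEq α]

theorem card_isTransferPath_head_eq (n : ℕ) (a : α) :
    Nat.card {s : Fin (n + 1) → α // IsTransferPath P R s ∧ s 0 = a} =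
      (transferMatrix P R ^ n *ᵥ indicatorVec P) a := by
  induction n generalizing a with
  | zero =>
    rw [pow_zero, one_mulVec, indicatorVec]
    split_ifs with ha
    · refine Nat.card_eq_one_iff_exists.2 ⟨⟨fun _ => a, ⟨fun _ => ha, Fin.elim0⟩, rfl⟩, ?_⟩
      rintro ⟨s, -, rfl⟩
      exact Subtype.ext (funext fun i => congrArg s (Fin.fin_one_eq_zero i))
    · exact Nat.card_eq_zero.2 (.inl ⟨fun ⟨s, hs, hs0⟩ => ha (hs0 ▸ hs.1 0)⟩)
  | succ n ih =>
    have tail_equiv : {s : Fin (n + 2) → α // IsTransferPath P R s ∧ s 0 = a} ≃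
        {t : Fin (n + 1) → α // P a ∧ R a (t 0) ∧ IsTransferPath P R t} :=
      { toFun s := ⟨Fin.tail s.1, by
          have h := s.2.1
          rw [← Fin.cons_self_tail s.1, s.2.2, isTransferPath_cons] at h
          exact h⟩
        invFun t := ⟨Fin.cons a t.1, (isTransferPath_cons a t.1).2 t.2, rfl⟩
        left_inv s := Subtype.ext (by simpa [s.2.2] using Fin.cons_self_tail s.1)
        right_inv _ := rfl }
    rw [Nat.card_congr tail_equiv, Nat.card_subtype_eq_sum_card_fiber _ (· 0), pow_succ',
      ← mulVec_mulVec]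
    refine Finset.sum_congr rfl fun b _ => ?_
    rw [← ih]
    simp only [transferMatrix, of_apply]
    split_ifs with hab
    · rw [one_mul]
      refine Nat.card_congr (Equiv.subtypeEquivRight fun t => ?_)
      constructor
      · rintro ⟨⟨-, -, ht⟩, ht0⟩
        exact ⟨ht, ht0⟩
      · rintro ⟨ht, rfl⟩
        exact ⟨⟨hab.1, hab.2, ht⟩, rfl⟩
    · rw [zero_mul]
      exact Nat.card_eq_zero.2 (.inl ⟨fun ⟨_, ⟨hPa, hR, _⟩, ht0⟩ => hab ⟨hPa, ht0 ▸ hR⟩⟩)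

theorem card_isTransferPath_eq (n : ℕ) :
    Nat.card {s : Fin (n + 1) → α // IsTransferPath P R s} =
      ∑ a, (transferMatrix P R ^ n *ᵥ indicatorVec P) a := by
  rw [Nat.card_subtype_eq_sum_card_fiber _ (· 0)]
  simp only [card_isTransferPath_head_eq]

end TransferMatrix

theorem rtAdj_iff {n : ℕ} {r s : Fin 2} {c d : Fin n} :
    rtAdj (r, c) (s, d) ↔ (c = d ∧ r ≠ s) ∨ ((d : ℕ) = c + 1 ∧ (r = s ∨ r = 0 ∧ s = 1)) ∨
      ((c : ℕ) = d + 1 ∧ (r = s ∨ r = 1 ∧ s = 0)) := by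
  simp only [rtAdj, gridAdj, Fin.ext_iff, abs_eq_max_neg, Fin.val_zero, Fin.val_one, ne_eq]
  omega

def columnsEquiv {β : Type*} {n : ℕ} : (Fin 2 × Fin n → β) ≃ (Fin n → β × β) where
  toFun w j := (w (0, j), w (1, j))
  invFun s p := if p.1 = 0 then (s p.2).1 else (s p.2).2
  left_inv w := funext fun ⟨r, j⟩ => by fin_cases r <;> rfl
  right_inv _ := rfl

section Staircase

variable {k : ℕ}

def Near (a b : Fin k) : Prop := |(a : ℤ) - b| ≤ 1

instance : DecidableRel (Near (k := k)) := fun _ _ => inferInstanceAs (Decidable (_ ≤ _))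

theorem near_comm {a b : Fin k} : Near a b ↔ Near b a := by
  rw [Near, Near, abs_sub_comm]

def IsColumn (c : Fin k × Fin k) : Prop := Near c.1 c.2

-- The edges of `RT_{2,n}` between columns `j` and `j + 1`; the last one is the diagonal
-- `(0, j) ~ (1, j + 1)`.
def RtStep (c d : Fin k × Fin k) : Prop := Near c.1 d.1 ∧ Near c.2 d.2 ∧ Near c.1 d.2

instance : DecidablePred (IsColumn (k := k)) := fun _ => inferInstanceAs (Decidable (Near _ _))

instance : DecidableRel (RtStep (k := k)) := fun _ _ => inferInstanceAs (Decidable (_ ∧ _))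

theorem isStaircase_rtAdj_iff {m : ℕ} (w : Fin 2 × Fin (m + 1) → Fin k) :
    IsStaircase rtAdj w ↔ IsTransferPath IsColumn RtStep (columnsEquiv w) := by
  constructor
  · intro hw
    have forward {r s : Fin 2} (i : Fin m) (hrs : r = s ∨ r = 0 ∧ s = 1) :
        Near (w (r, i.castSucc)) (w (s, i.succ)) :=
      hw _ _ (rtAdj_iff.2 (.inr (.inl ⟨by simp, hrs⟩)))
    exact ⟨fun j => hw (0, j) (1, j) (rtAdj_iff.2 (.inl ⟨rfl, by decide⟩)),
      fun i => ⟨forward i (.inl rfl), forward i (.inl rfl), forward i (.inr ⟨rfl, rfl⟩)⟩⟩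
  · rintro ⟨hcol, hstep⟩
    have vertical {r s : Fin 2} (j : Fin (m + 1)) (hrs : r ≠ s) : Near (w (r, j)) (w (s, j)) := by
      fin_cases r <;> fin_cases s
      exacts [absurd rfl hrs, hcol j, near_comm.1 (hcol j), absurd rfl hrs]
    have forward {r s : Fin 2} (i : Fin m) (hrs : r = s ∨ r = 0 ∧ s = 1) :
        Near (w (r, i.castSucc)) (w (s, i.succ)) := by
      obtain rfl | ⟨rfl, rfl⟩ := hrs
      · fin_cases r
        exacts [(hstep i).1, (hstep i).2.1]
      · exact (hstep i).2.2
    rintro ⟨r, c⟩ ⟨s, d⟩ h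
    obtain ⟨rfl, hrs⟩ | ⟨hdc, hrs⟩ | ⟨hcd, hrs⟩ := rtAdj_iff.1 h
    · exact vertical c hrs
    · obtain ⟨i, rfl, rfl⟩ : ∃ i : Fin m, c = i.castSucc ∧ d = i.succ :=
        ⟨⟨c, by omega⟩, rfl, Fin.ext hdc⟩
      exact forward i hrs
    · obtain ⟨i, rfl, rfl⟩ : ∃ i : Fin m, d = i.castSucc ∧ c = i.succ :=
        ⟨⟨d, by omega⟩, rfl, Fin.ext hcd⟩
      exact near_comm.1 (forward i (by tauto))

theorem scount_rtAdj_eq_sum_mulVec (m : ℕ) :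
    scount k (m + 1) rtAdj =
      ∑ c, (transferMatrix IsColumn RtStep ^ m *ᵥ indicatorVec (IsColumn (k := k))) c := by
  rw [scount, ← card_isTransferPath_eq]
  exact Nat.card_congr (columnsEquiv.subtypeEquiv isStaircase_rtAdj_iff)

end Staircase

theorem transferMatrix_rt_three_pow_three_mulVec :
    transferMatrix IsColumn RtStep ^ 3 *ᵥ indicatorVec (IsColumn (k := 3)) =
      4 • transferMatrix IsColumn RtStep ^ 2 *ᵥ indicatorVec IsColumn +
        4 • transferMatrix IsColumn RtStep *ᵥ indicatorVec IsColumn + 1 • indicatorVec IsColumn := by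
  decide

theorem rt_k3_recurrence :
    scount 3 1 rtAdj = 7 ∧ scount 3 2 rtAdj = 33 ∧ scount 3 3 rtAdj = 161 ∧
      ∀ n : ℕ, 1 ≤ n →
        scount 3 (n + 3) rtAdj =
          4 * scount 3 (n + 2) rtAdj + 4 * scount 3 (n + 1) rtAdj + scount 3 n rtAdj := by
  refine ⟨?_, ?_, ?_, fun n hn => ?_⟩
  · rw [scount_rtAdj_eq_sum_mulVec 0]; decide
  · rw [scount_rtAdj_eq_sum_mulVec 1]; decide
  · rw [scount_rtAdj_eq_sum_mulVec 2]; decide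
  obtain ⟨m, rfl⟩ := Nat.exists_eq_add_of_le' hn
  simp only [scount_rtAdj_eq_sum_mulVec,
    pow_add_three_mulVec _ _ _ _ _ transferMatrix_rt_three_pow_three_mulVec, Pi.add_apply,
    Pi.smul_apply, smul_eq_mul, Finset.sum_add_distrib, ← Finset.mul_sum, one_mul]
end

section
/- For the rectangle-triangular graph and n ≥ 2, the number of staircase words over [k] with first column (i,i+1) (for 1 ≤ i ≤ k-1) satisfies: s_k(RT_{2,n}, i, i+1) = s_k(RT_{2,n-1}, i-1, i) + s_k(RT_{2,n-1}, i, i) + s_k(RT_{2,n-1}, i+1, i) + s_k(RT_{2,n-1}, i, i+1) + s_k(RT_{2,n-1}, i+1, i+1), where terms with indices outside [k] are 0. -/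
lemma abs_add_abs_eq_one {x y : ℤ} :
    |x| + |y| = 1 ↔ (x = 0 ∧ (y = 1 ∨ y = -1)) ∨ ((x = 1 ∨ x = -1) ∧ y = 0) := by
  rcases abs_cases x with ⟨e1, _⟩ | ⟨e1, _⟩ <;> rcases abs_cases y with ⟨e2, _⟩ | ⟨e2, _⟩ <;> omega

lemma rtAdj_iff_s16 {m : ℕ} (u1 v1 : Fin 2) (u2 v2 : Fin m) :
    rtAdj (u1, u2) (v1, v2) ↔
      (u1 = v1 ∧ ((u2 : ℤ) = v2 + 1 ∨ (v2 : ℤ) = u2 + 1)) ∨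
      (u1 = 0 ∧ v1 = 1 ∧ (u2 = v2 ∨ (v2 : ℤ) = u2 + 1)) ∨
      (u1 = 1 ∧ v1 = 0 ∧ (u2 = v2 ∨ (v2 : ℤ) = u2 - 1)) := by
  simp only [rtAdj, gridAdj, abs_add_abs_eq_one, Fin.ext_iff, ← Fin.val_eq_val]
  have hu2 := u2.isLt
  have hv2 := v2.isLt
  fin_cases u1 <;> fin_cases v1 <;> simp <;> omega

lemma rtAdj_succ {m : ℕ} (u1 v1 : Fin 2) (u2 v2 : Fin (m + 1)) :
    rtAdj (u1, u2.succ) (v1, v2.succ) ↔ rtAdj (u1, u2) (v1, v2) := by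
  simp only [rtAdj_iff_s16, Fin.val_succ, ← Fin.val_eq_val]
  push_cast
  omega

section
variable {k n : ℕ}

def restrictW (k : ℕ) (w : Fin 2 × Fin (n + 2) → Fin k) : Fin 2 × Fin (n + 1) → Fin k :=
  fun p => w (p.1, p.2.succ)

def extendW (k : ℕ) (a b : Fin k) (w : Fin 2 × Fin (n + 1) → Fin k) :
    Fin 2 × Fin (n + 2) → Fin k :=
  fun p => if h : p.2 = 0 then (if p.1 = 0 then a else b) else w (p.1, p.2.pred h)

lemma restrict_extend (a b : Fin k) (w : Fin 2 × Fin (n + 1) → Fin k) :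
    restrictW k (extendW k a b w) = w := by
  funext p
  simp [restrictW, extendW, Fin.succ_ne_zero]

lemma extend_restrict (w : Fin 2 × Fin (n + 2) → Fin k) :
    extendW k (w (0, 0)) (w (1, 0)) (restrictW k w) = w := by
  funext p
  obtain ⟨p1, p2⟩ := p
  by_cases h : p2 = 0
  · subst h
    fin_cases p1 <;> simp [extendW]
  · simp [extendW, h, restrictW, Fin.succ_pred]

lemma extend_apply_zero (a b : Fin k) (w : Fin 2 × Fin (n + 1) → Fin k) (p : Fin 2) :
    extendW k a b w (p, 0) = if p = 0 then a else b := by simp [extendW]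

lemma extend_apply_succ (a b : Fin k) (w : Fin 2 × Fin (n + 1) → Fin k) (p : Fin 2)
    (q : Fin (n + 1)) : extendW k a b w (p, q.succ) = w (p, q) := by
  simp [extendW, Fin.succ_ne_zero]

lemma staircase_iff (W : Fin 2 × Fin (n + 2) → Fin k) :
    IsStaircase rtAdj W ↔ IsStaircase rtAdj (restrictW k W) ∧
      |(W (0, 0) : ℤ) - W (1, 0)| ≤ 1 ∧
      |(W (0, 0) : ℤ) - W (0, (0 : Fin (n + 1)).succ)| ≤ 1 ∧
      |(W (1, 0) : ℤ) - W (1, (0 : Fin (n + 1)).succ)| ≤ 1 ∧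
      |(W (0, 0) : ℤ) - W (1, (0 : Fin (n + 1)).succ)| ≤ 1 := by
  constructor
  · intro hW
    refine ⟨?_, ?_, ?_, ?_, ?_⟩
    · intro u v h
      exact hW (u.1, u.2.succ) (v.1, v.2.succ) ((rtAdj_succ u.1 v.1 u.2 v.2).2 h)
    · exact hW _ _ ((rtAdj_iff_s16 0 1 0 0).2 (Or.inr (Or.inl ⟨rfl, rfl, Or.inl rfl⟩)))
    · refine hW _ _ ((rtAdj_iff_s16 0 0 0 (0 : Fin (n+1)).succ).2 (Or.inl ⟨rfl, Or.inr ?_⟩))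
      simp
    · refine hW _ _ ((rtAdj_iff_s16 1 1 0 (0 : Fin (n+1)).succ).2 (Or.inl ⟨rfl, Or.inr ?_⟩))
      simp
    · refine hW _ _ ((rtAdj_iff_s16 0 1 0 (0 : Fin (n+1)).succ).2
        (Or.inr (Or.inl ⟨rfl, rfl, Or.inr ?_⟩)))
      simp
  · rintro ⟨hr, h1, h2, h3, h4⟩ ⟨u1, u2⟩ ⟨v1, v2⟩ h
    rw [rtAdj_iff_s16] at h
    rcases Fin.eq_zero_or_eq_succ u2 with rfl | ⟨s, rfl⟩ <;>
      rcases Fin.eq_zero_or_eq_succ v2 with rfl | ⟨t, rfl⟩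
    · -- both column 0
      rcases h with ⟨_, h | h⟩ | ⟨rfl, rfl, _⟩ | ⟨rfl, rfl, _⟩
      · exfalso; simp only [Fin.val_zero] at h; omega
      · exfalso; simp only [Fin.val_zero] at h; omega
      · exact h1
      · rw [abs_sub_comm]; exact h1
    · -- u2 = 0, v2 = t.succ
      have ht : t = 0 := by
        apply Fin.ext
        rcases h with ⟨_, h | h⟩ | ⟨_, _, h | h⟩ | ⟨_, _, h | h⟩ <;>
          simp only [Fin.ext_iff, Fin.val_succ, Fin.val_zero] at h ⊢ <;> omega
      subst ht
      rcases h with ⟨hv, _⟩ | ⟨hu, hv, _⟩ | ⟨hu, hv, h | h⟩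
      · subst hv
        fin_cases u1
        · exact h2
        · exact h3
      · subst hu; subst hv; exact h4
      · exfalso; simp only [Fin.ext_iff, Fin.val_succ, Fin.val_zero] at h; omega
      · exfalso; simp only [Fin.val_succ, Fin.val_zero] at h; omega
    · -- u2 = s.succ, v2 = 0
      have hs : s = 0 := by
        apply Fin.ext
        rcases h with ⟨_, h | h⟩ | ⟨_, _, h | h⟩ | ⟨_, _, h | h⟩ <;>
          simp only [Fin.ext_iff, Fin.val_succ, Fin.val_zero] at h ⊢ <;> omega
      subst hs
      rcases h with ⟨hv, _⟩ | ⟨hu, hv, h | h⟩ | ⟨hu, hv, _⟩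
      · subst hv
        rw [abs_sub_comm]
        fin_cases u1
        · exact h2
        · exact h3
      · exfalso; simp only [Fin.ext_iff, Fin.val_succ, Fin.val_zero] at h; omega
      · exfalso; simp only [Fin.val_succ, Fin.val_zero] at h; omega
      · subst hu; subst hv; rw [abs_sub_comm]; exact h4
    · -- both positive
      exact hr (u1, s) (v1, t) ((rtAdj_succ u1 v1 s t).1 (by rw [rtAdj_iff_s16]; exact h))

end

section
variable {k n : ℕ}

lemma vert_edge {m : ℕ} [NeZero m] : rtAdj ((0, 0) : Fin 2 × Fin m) (1, 0) :=
  (rtAdj_iff_s16 0 1 0 0).2 (Or.inr (Or.inl ⟨rfl, rfl, Or.inl rfl⟩))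

def Cond (k n i : ℕ) (w : Fin 2 × Fin (n + 1) → Fin k) : Prop :=
  |((i : ℤ) - 1) - w (0, 0)| ≤ 1 ∧ |(i : ℤ) - w (1, 0)| ≤ 1 ∧ |((i : ℤ) - 1) - w (1, 0)| ≤ 1

lemma main_equiv (i : ℕ) (hi : 1 ≤ i) (hik : i + 1 ≤ k) :
    Nonempty ({W : Fin 2 × Fin (n + 2) → Fin k // IsStaircase rtAdj W ∧
        ((W (0, 0) : ℕ) + 1 = i) ∧ ((W (1, 0) : ℕ) + 1 = i + 1)} ≃
      {w : Fin 2 × Fin (n + 1) → Fin k // IsStaircase rtAdj w ∧ Cond k n i w}) := by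
  have hA : i - 1 < k := by omega
  have hB : i < k := by omega
  set A : Fin k := ⟨i - 1, hA⟩ with hAdef
  set B : Fin k := ⟨i, hB⟩ with hBdef
  have vA : (A : ℤ) = (i : ℤ) - 1 := by simp only [hAdef, Fin.val_mk]; omega
  have vB : (B : ℤ) = (i : ℤ) := by simp only [hBdef, Fin.val_mk]; try omega
  refine ⟨{
    toFun := fun W => ⟨restrictW k W.1, by
      obtain ⟨hW, e0, e1⟩ := W.2
      obtain ⟨hs, g1, g2, g3, g4⟩ := (staircase_iff W.1).1 hW
      refine ⟨hs, ?_, ?_, ?_⟩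
      · have e : restrictW k W.1 (0, 0) = W.1 (0, (0 : Fin (n+1)).succ) := rfl
        rw [e, abs_le]; rw [abs_le] at g2; omega
      · have e : restrictW k W.1 (1, 0) = W.1 (1, (0 : Fin (n+1)).succ) := rfl
        rw [e, abs_le]; rw [abs_le] at g3; omega
      · have e : restrictW k W.1 (1, 0) = W.1 (1, (0 : Fin (n+1)).succ) := rfl
        rw [e, abs_le]; rw [abs_le] at g4; omega⟩
    invFun := fun w => ⟨extendW k A B w.1, by
      obtain ⟨hw, c1, c2, c3⟩ := w.2
      have E0 : extendW k A B w.1 (0, 0) = A := extend_apply_zero _ _ _ 0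
      have E1 : extendW k A B w.1 (1, 0) = B := by
        rw [extend_apply_zero, if_neg (by norm_num)]
      have E2 : extendW k A B w.1 (0, (0 : Fin (n+1)).succ) = w.1 (0, 0) :=
        extend_apply_succ _ _ _ 0 0
      have E3 : extendW k A B w.1 (1, (0 : Fin (n+1)).succ) = w.1 (1, 0) :=
        extend_apply_succ _ _ _ 1 0
      rw [abs_le] at c1 c2 c3
      refine ⟨?_, ?_, ?_⟩
      · rw [staircase_iff, restrict_extend, E0, E1, E2, E3]
        refine ⟨hw, ?_, ?_, ?_, ?_⟩ <;>
          · rw [abs_le]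
            try rw [vA]
            try rw [vB]
            omega
      · rw [E0]; rw [hAdef]; simp only [Fin.val_mk]; omega
      · rw [E1]; try rw [hBdef]⟩
    left_inv := fun W => by
      apply Subtype.ext
      show extendW k A B (restrictW k W.1) = W.1
      obtain ⟨hW, e0, e1⟩ := W.2
      have E0 : A = W.1 (0, 0) := Fin.ext (by simp only [hAdef, Fin.val_mk]; omega)
      have E1 : B = W.1 (1, 0) := Fin.ext (by simp only [hBdef, Fin.val_mk]; omega)
      rw [E0, E1, extend_restrict]
    right_inv := fun w => by
      apply Subtype.ext
      show restrictW k (extendW k A B w.1) = w.1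
      rw [restrict_extend] }⟩

end

lemma card_split {α : Type*} [Finite α] (p q r : α → Prop) (h : ∀ a, ¬(q a ∧ r a)) :
    Nat.card {a // p a ∧ (q a ∨ r a)} =
      Nat.card {a // p a ∧ q a} + Nat.card {a // p a ∧ r a} := by
  classical
  rw [← Nat.card_sum]
  refine Nat.card_congr ?_
  refine (Equiv.subtypeEquivRight (fun a => by tauto)).trans
    (subtypeOrEquiv (fun a => p a ∧ q a) (fun a => p a ∧ r a) ?_)
  intro f hq hr a ha
  exact absurd ⟨(hq a ha).2, (hr a ha).2⟩ (h a)

lemma cond_iff {k n : ℕ} (i : ℕ) (hi : 1 ≤ i) (w : Fin 2 × Fin (n + 1) → Fin k)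
    (hw : IsStaircase rtAdj w) :
    Cond k n i w ↔
      (((w (0,0) : ℕ) + 1 = i - 1 ∧ (w (1,0) : ℕ) + 1 = i) ∨
       (((w (0,0) : ℕ) + 1 = i ∧ (w (1,0) : ℕ) + 1 = i) ∨
       (((w (0,0) : ℕ) + 1 = i + 1 ∧ (w (1,0) : ℕ) + 1 = i) ∨
       (((w (0,0) : ℕ) + 1 = i ∧ (w (1,0) : ℕ) + 1 = i + 1) ∨
       ((w (0,0) : ℕ) + 1 = i + 1 ∧ (w (1,0) : ℕ) + 1 = i + 1))))) := by
  have hv := hw (0, 0) (1, 0) vert_edge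
  rw [abs_le] at hv
  simp only [Cond, abs_le]
  omega

theorem rt_rec_offdiag (k n i : ℕ) (hi : 1 ≤ i) (hik : i + 1 ≤ k) :
    scountIJ k (n + 1) rtAdj i (i + 1) =
      scountIJ k n rtAdj (i - 1) i + scountIJ k n rtAdj i i
        + scountIJ k n rtAdj (i + 1) i + scountIJ k n rtAdj i (i + 1)
        + scountIJ k n rtAdj (i + 1) (i + 1) := by
  obtain ⟨e⟩ := main_equiv (k := k) (n := n) i hi hik
  set P : (Fin 2 × Fin (n + 1) → Fin k) → Prop := IsStaircase rtAdj with hP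
  set Q1 : (Fin 2 × Fin (n + 1) → Fin k) → Prop :=
    fun w => (w (0,0) : ℕ) + 1 = i - 1 ∧ (w (1,0) : ℕ) + 1 = i with hQ1
  set Q2 : (Fin 2 × Fin (n + 1) → Fin k) → Prop :=
    fun w => (w (0,0) : ℕ) + 1 = i ∧ (w (1,0) : ℕ) + 1 = i with hQ2
  set Q3 : (Fin 2 × Fin (n + 1) → Fin k) → Prop :=
    fun w => (w (0,0) : ℕ) + 1 = i + 1 ∧ (w (1,0) : ℕ) + 1 = i with hQ3
  set Q4 : (Fin 2 × Fin (n + 1) → Fin k) → Prop :=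
    fun w => (w (0,0) : ℕ) + 1 = i ∧ (w (1,0) : ℕ) + 1 = i + 1 with hQ4
  set Q5 : (Fin 2 × Fin (n + 1) → Fin k) → Prop :=
    fun w => (w (0,0) : ℕ) + 1 = i + 1 ∧ (w (1,0) : ℕ) + 1 = i + 1 with hQ5
  have step1 : scountIJ k (n + 1) rtAdj i (i + 1) =
      Nat.card {w : Fin 2 × Fin (n + 1) → Fin k // P w ∧ (Q1 w ∨ Q2 w ∨ Q3 w ∨ Q4 w ∨ Q5 w)} := by
    refine (Nat.card_congr e).trans (Nat.card_congr (Equiv.subtypeEquivRight fun w => ?_))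
    exact and_congr_right fun hw => cond_iff i hi w hw
  have d1 : ∀ w, ¬(Q1 w ∧ (Q2 w ∨ Q3 w ∨ Q4 w ∨ Q5 w)) := by
    intro w; simp only [hQ1, hQ2, hQ3, hQ4, hQ5]; omega
  have d2 : ∀ w, ¬(Q2 w ∧ (Q3 w ∨ Q4 w ∨ Q5 w)) := by
    intro w; simp only [hQ2, hQ3, hQ4, hQ5]; omega
  have d3 : ∀ w, ¬(Q3 w ∧ (Q4 w ∨ Q5 w)) := by
    intro w; simp only [hQ3, hQ4, hQ5]; omega
  have d4 : ∀ w, ¬(Q4 w ∧ Q5 w) := by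
    intro w; simp only [hQ4, hQ5]; omega
  rw [step1, card_split P Q1 _ d1, card_split P Q2 _ d2, card_split P Q3 _ d3,
    card_split P Q4 _ d4]
  have r1 : Nat.card {w : Fin 2 × Fin (n + 1) → Fin k // P w ∧ Q1 w} =
      scountIJ k n rtAdj (i - 1) i := rfl
  have r2 : Nat.card {w : Fin 2 × Fin (n + 1) → Fin k // P w ∧ Q2 w} =
      scountIJ k n rtAdj i i := rfl
  have r3 : Nat.card {w : Fin 2 × Fin (n + 1) → Fin k // P w ∧ Q3 w} =
      scountIJ k n rtAdj (i + 1) i := rfl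
  have r4 : Nat.card {w : Fin 2 × Fin (n + 1) → Fin k // P w ∧ Q4 w} =
      scountIJ k n rtAdj i (i + 1) := rfl
  have r5 : Nat.card {w : Fin 2 × Fin (n + 1) → Fin k // P w ∧ Q5 w} =
      scountIJ k n rtAdj (i + 1) (i + 1) := rfl
  rw [r1, r2, r3, r4, r5]
  ring
end
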